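/- arXiv:2405.04954 — 3 statements merged into one kernel-verified Lean document; each statement's English description precedes it below -/
import Mathlib

section
/- Let k be a nonnegative integer and l a positive integer, and let P_l(X) be the set of x-parking functions of length l for X = (1, k, ..., k): sequences of positive integers whose nondecreasing rearrangement satisfies c_{(i)} ≤ 1 + (i-1)k. Let Z(c) = #{i : c_i = 1}. Then Σ_{c ∈ P_l(X)} q^{Z(c)} = q·(q + lk)^{l-1} as a polynomial identity in q. -/
open Finset
open scoped Classical

/-- `c` rearranges nondecreasingly so that the `i`-th order statistic is at most `u i`. -/
def SortedLE {n : ℕ} (c u : Fin n → ℕ) : Prop :=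
  ∃ σ : Equiv.Perm (Fin n),
    (∀ i j : Fin n, i ≤ j → c (σ i) ≤ c (σ j)) ∧ ∀ i, c (σ i) ≤ u i

/-- The (finite) set of `(1,k,…,k)`-parking functions of length `l`. -/
noncomputable def xParkFinset (k l : ℕ) : Finset (Fin l → ℕ) :=
  (Fintype.piFinset fun _ : Fin l => Finset.Icc 1 (1 + (l - 1) * k)).filter
    (fun c => SortedLE c (fun i => 1 + i.1 * k))

/-!
Sort the parking functions `c` of length `l` by the set `A` of positions where `c = 1`, and let
`j = #A`. Off `A` every entry is at least `2`; collapsing the values `2, …, 1 + jk` to `1` and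
shifting larger values down by `jk` turns these entries into a parking function `e` of length
`l - j`, and every `1`-entry of `e` has exactly `jk` preimages. So the fibre over `A` has
`∑_e (jk)^{Z(e)}` elements: the same generating function, evaluated at `q = jk`. By induction
this is `jk (lk)^{l-j-1}` for `0 < j < l`, and the theorem reduces to the Abel-type identity
`q^l + ∑_{0<j<l} C(l, j) q^j jk (lk)^{l-j-1} = q (q + lk)^{l-1}`.
-/

theorem card_filter_comp_perm {n : ℕ} (c : Fin n → ℕ) (σ : Equiv.Perm (Fin n)) (a : ℕ) :
    #{j | c (σ j) ≤ a} = #{j | c j ≤ a} := by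
  simp only [card_filter]
  exact Equiv.sum_comp σ fun j => if c j ≤ a then 1 else 0

theorem sortedLE_iff_forall_lt_card_filter_le {n : ℕ} {c u : Fin n → ℕ} :
    SortedLE c u ↔ ∀ i : Fin n, (i : ℕ) < #{j | c j ≤ u i} := by
  constructor
  · rintro ⟨σ, hσ, hle⟩ i
    rw [← card_filter_comp_perm c σ]
    exact (Tuple.lt_card_le_iff_apply_le_of_monotone (f := c ∘ σ) (hσ · · ·)).2 (hle i)
  · intro h
    refine ⟨Tuple.sort c, fun _ _ hij => Tuple.monotone_sort c hij, fun i => ?_⟩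
    have := h i
    rw [← card_filter_comp_perm c (Tuple.sort c)] at this
    exact (Tuple.lt_card_le_iff_apply_le_of_monotone (Tuple.monotone_sort c)).1 this

noncomputable def parkingFinset (ι : Type*) [Fintype ι] (k : ℕ) : Finset (ι → ℕ) :=
  (Fintype.piFinset fun _ : ι => Icc 1 (1 + (Fintype.card ι - 1) * k)).filter
    fun c => ∀ s < Fintype.card ι, s < #{i | c i ≤ 1 + s * k}

section Parking

variable {ι : Type*} [Fintype ι] {k : ℕ}

theorem mem_parkingFinset {c : ι → ℕ} :
    c ∈ parkingFinset ι k ↔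
      (∀ i, 1 ≤ c i) ∧ ∀ s < Fintype.card ι, s < #{i | c i ≤ 1 + s * k} := by
  rw [parkingFinset, mem_filter, Fintype.mem_piFinset]
  refine ⟨fun ⟨hc, hpark⟩ => ⟨fun i => (mem_Icc.1 (hc i)).1, hpark⟩,
    fun ⟨hpos, hpark⟩ => ⟨fun i => mem_Icc.2 ⟨hpos i, ?_⟩, hpark⟩⟩
  have hlast := hpark (Fintype.card ι - 1) (by have := Fintype.card_pos_iff.2 ⟨i⟩; omega)
  have hall : ({j | c j ≤ 1 + (Fintype.card ι - 1) * k} : Finset ι) = univ :=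
    eq_univ_of_card _ (le_antisymm (card_le_univ _) (by omega))
  simpa using (eq_univ_iff_forall.1 hall) i

theorem exists_eq_one_of_mem_parkingFinset [Nonempty ι] {c : ι → ℕ}
    (hc : c ∈ parkingFinset ι k) : ∃ i, c i = 1 := by
  obtain ⟨hpos, hpark⟩ := mem_parkingFinset.1 hc
  obtain ⟨i, hi⟩ := card_pos.1 (by simpa using hpark 0 Fintype.card_pos)
  exact ⟨i, le_antisymm (by simpa using hi) (hpos i)⟩

end Parking

theorem xParkFinset_eq_parkingFinset (k l : ℕ) : xParkFinset k l = parkingFinset (Fin l) k := by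
  rw [xParkFinset, parkingFinset, Fintype.card_fin]
  congr! 2 with c
  rw [sortedLE_iff_forall_lt_card_filter_le, Fin.forall_iff]

def collapse (a x : ℕ) : ℕ := if x ≤ 1 + a then 1 else x - a

theorem one_le_collapse (a x : ℕ) : 1 ≤ collapse a x := by
  unfold collapse; split_ifs <;> omega

theorem collapse_le_one_add_iff {a b x : ℕ} : collapse a x ≤ 1 + b ↔ x ≤ 1 + a + b := by
  unfold collapse; split_ifs <;> omega

def collapsePreimage (a y : ℕ) : Finset ℕ := if y = 1 then Icc 2 (1 + a) else {y + a}

theorem mem_collapsePreimage {a x y : ℕ} (hy : 1 ≤ y) :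
    x ∈ collapsePreimage a y ↔ 2 ≤ x ∧ collapse a x = y := by
  unfold collapsePreimage collapse
  split_ifs <;> simp only [mem_Icc, mem_singleton] <;> omega

theorem card_collapsePreimage (a y : ℕ) : #(collapsePreimage a y) = if y = 1 then a else 1 := by
  unfold collapsePreimage; split_ifs <;> simp

section OnesFiber

variable {ι : Type*} [Fintype ι] (k : ℕ) (A : Finset ι)

def restrictCollapse (c : ι → ℕ) : {i // i ∉ A} → ℕ := fun i => collapse (#A * k) (c i)

variable {k A}

theorem card_filter_le_eq_card_add {c : ι → ℕ} (hA : ∀ i ∈ A, c i = 1) (b : ℕ) :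
    #{i | c i ≤ 1 + #A * k + b} = #A + #{i | restrictCollapse k A c i ≤ 1 + b} := by
  simp only [card_filter, restrictCollapse, collapse_le_one_add_iff]
  rw [← Fintype.sum_subtype_add_sum_subtype (· ∈ A)]
  congr 1
  have hle : ∀ i : {i // i ∈ A}, c i ≤ 1 + #A * k + b := fun i => by rw [hA i i.2]; omega
  simp [hle]

theorem forall_lt_card_filter_le_iff {c : ι → ℕ} (hA : ∀ i ∈ A, c i = 1) :
    (∀ s < Fintype.card ι, s < #{i | c i ≤ 1 + s * k}) ↔
      ∀ r < Fintype.card {i // i ∉ A}, r < #{i | restrictCollapse k A c i ≤ 1 + r * k} := by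
  have hcard : Fintype.card {i // i ∉ A} + #A = Fintype.card ι := by
    simp [Fintype.card_subtype_compl, card_le_univ]
  constructor
  · intro h r hr
    have := h (#A + r) (by omega)
    rw [add_mul, ← add_assoc, card_filter_le_eq_card_add hA] at this
    omega
  · intro h s hs
    by_cases hsA : s < #A
    · have : A ⊆ ({i | c i ≤ 1 + s * k} : Finset ι) := fun i hi => by simp [hA i hi]
      exact hsA.trans_le (card_le_card this)
    · obtain ⟨r, rfl⟩ : ∃ r, s = #A + r := ⟨s - #A, by omega⟩
      rw [add_mul, ← add_assoc, card_filter_le_eq_card_add hA]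
      have := h r (by omega)
      omega

theorem restrictCollapse_mem_parkingFinset {c : ι → ℕ} (hc : c ∈ parkingFinset ι k)
    (hA : ∀ i ∈ A, c i = 1) : restrictCollapse k A c ∈ parkingFinset {i // i ∉ A} k :=
  mem_parkingFinset.2
    ⟨fun _ => one_le_collapse _ _, (forall_lt_card_filter_le_iff hA).1 (mem_parkingFinset.1 hc).2⟩

variable (k A) in
noncomputable def collapseBox (e : {i // i ∉ A} → ℕ) (i : ι) : Finset ℕ :=
  if h : i ∈ A then {1} else collapsePreimage (#A * k) (e ⟨i, h⟩)

theorem mem_piFinset_collapseBox {c : ι → ℕ} {e : {i // i ∉ A} → ℕ} (he : ∀ i, 1 ≤ e i) :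
    c ∈ Fintype.piFinset (collapseBox k A e) ↔
      (∀ i ∈ A, c i = 1) ∧ ∀ i (h : i ∉ A), 2 ≤ c i ∧ collapse (#A * k) (c i) = e ⟨i, h⟩ := by
  simp only [Fintype.mem_piFinset, collapseBox]
  refine ⟨fun hc => ⟨fun i hi => ?_, fun i hi => ?_⟩, fun ⟨hA, hAc⟩ i => ?_⟩
  · simpa [hi] using hc i
  · simpa [hi, mem_collapsePreimage (he _)] using hc i
  · by_cases hi : i ∈ A
    · simp [hi, hA i hi]
    · simpa [hi, mem_collapsePreimage (he _)] using hAc i hi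

theorem filter_restrictCollapse_eq_piFinset {e : {i // i ∉ A} → ℕ}
    (he : e ∈ parkingFinset {i // i ∉ A} k) :
    {c ∈ parkingFinset ι k | ({i | c i = 1} : Finset ι) = A ∧ restrictCollapse k A c = e} =
      Fintype.piFinset (collapseBox k A e) := by
  obtain ⟨hepos, hepark⟩ := mem_parkingFinset.1 he
  ext c
  rw [mem_filter, mem_piFinset_collapseBox hepos, mem_parkingFinset]
  constructor
  · rintro ⟨⟨hpos, -⟩, rfl, rfl⟩
    refine ⟨fun i hi => by simpa using hi, fun i hi => ⟨?_, rfl⟩⟩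
    have := hpos i
    have : c i ≠ 1 := by simpa using hi
    omega
  · rintro ⟨hA, hAc⟩
    have hres : restrictCollapse k A c = e := funext fun i => (hAc i i.2).2
    refine ⟨⟨fun i => ?_, ?_⟩, ?_, hres⟩
    · by_cases hi : i ∈ A
      · exact (hA i hi).ge
      · exact (hAc i hi).1.trans' (by norm_num)
    · rwa [forall_lt_card_filter_le_iff hA, hres]
    · ext i
      by_cases hi : i ∈ A
      · simp [hi, hA i hi]
      · have := (hAc i hi).1
        simp only [mem_filter, mem_univ, true_and, hi, iff_false]
        omega

theorem card_piFinset_collapseBox (e : {i // i ∉ A} → ℕ) :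
    #(Fintype.piFinset (collapseBox k A e)) = (#A * k) ^ #{i | e i = 1} := by
  rw [Fintype.card_piFinset, ← Fintype.prod_subtype_mul_prod_subtype (· ∈ A)]
  have hAc : ∀ i : {i // i ∉ A}, #(collapseBox k A e i) = if e i = 1 then #A * k else 1 :=
    fun i => by rw [collapseBox, dif_neg i.2, card_collapsePreimage]
  have hA : ∀ i : {i // i ∈ A}, #(collapseBox k A e i) = 1 :=
    fun i => by rw [collapseBox, dif_pos i.2, card_singleton]
  simp only [hA, hAc, prod_const_one, one_mul, prod_ite, prod_const]
  simp

theorem card_filter_eq_sum_parkingFinset :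
    #{c ∈ parkingFinset ι k | ({i | c i = 1} : Finset ι) = A} =
      ∑ e ∈ parkingFinset {i // i ∉ A} k, (#A * k) ^ #{i | e i = 1} := by
  rw [card_eq_sum_card_fiberwise (f := restrictCollapse k A) fun c hc => ?_]
  · refine sum_congr rfl fun e he => ?_
    rw [filter_filter, filter_restrictCollapse_eq_piFinset he, card_piFinset_collapseBox]
  · obtain ⟨hc, hA⟩ := mem_filter.1 hc
    exact restrictCollapse_mem_parkingFinset hc fun i hi => by
      rw [← hA] at hi
      simpa using hi

end OnesFiber

universe u

section Generating

variable {R : Type*} [CommSemiring R] {k : ℕ}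

theorem sum_parkingFinset_eq_sum_powerset {ι : Type*} [Fintype ι] (q : R) :
    ∑ c ∈ parkingFinset ι k, q ^ #{i | c i = 1} =
      ∑ A ∈ (univ : Finset ι).powerset,
        q ^ #A * ∑ e ∈ parkingFinset {i // i ∉ A} k, ((#A : R) * k) ^ #{i | e i = 1} := by
  rw [← sum_fiberwise_of_maps_to (g := fun c => ({i | c i = 1} : Finset ι))
    (t := (univ : Finset ι).powerset) fun c _ => mem_powerset.2 (subset_univ _)]
  refine sum_congr rfl fun A _ => ?_
  rw [sum_congr rfl fun c hc => by rw [(mem_filter.1 hc).2], sum_const,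
    card_filter_eq_sum_parkingFinset, nsmul_eq_mul, mul_comm]
  push_cast
  rfl

theorem sum_parkingFinset_zero_pow {ι : Type*} [Fintype ι] [Nonempty ι] :
    ∑ c ∈ parkingFinset ι k, (0 : R) ^ #{i | c i = 1} = 0 := by
  refine sum_eq_zero fun c hc => zero_pow (card_pos.2 ?_).ne'
  obtain ⟨i, hi⟩ := exists_eq_one_of_mem_parkingFinset hc
  exact ⟨i, by simpa using hi⟩

theorem sum_parkingFinset_of_isEmpty {ι : Type*} [Fintype ι] [IsEmpty ι] (x : R) :
    ∑ c ∈ parkingFinset ι k, x ^ #{i | c i = 1} = 1 := by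
  have : parkingFinset ι k = {isEmptyElim} := by
    ext c
    simp [mem_parkingFinset, Subsingleton.elim c isEmptyElim]
  simp [this]

variable (k) in
def abelPoly : ℕ → R → R
  | 0, _ => 1
  | m + 1, x => x * (x + (m + 1 : ℕ) * k) ^ m

theorem sum_range_choose_abelPoly (m : ℕ) (q : R) :
    ∑ j ∈ range (m + 2), (m + 1).choose j • (q ^ j * abelPoly k (m + 1 - j) ((j : R) * k)) =
      abelPoly k (m + 1) q := by
  rw [sum_range_succ', abelPoly, add_pow, mul_sum]
  simp only [Nat.cast_zero, zero_mul, Nat.sub_zero, abelPoly.eq_2, mul_zero, smul_zero, add_zero]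
  refine sum_congr rfl fun i hi => ?_
  obtain ⟨t, rfl⟩ : ∃ t, m = i + t := ⟨m - i, by grind⟩
  rw [show i + t + 1 - (i + 1) = t by omega, Nat.add_sub_cancel_left, nsmul_eq_mul]
  rcases t with _ | t
  · simp [abelPoly, pow_succ, mul_comm]
  · have hchoose : ((i + (t + 1) + 1).choose (i + 1) : R) * (i + 1) =
        (i + (t + 1) + 1) * (i + (t + 1)).choose i := by
      have := congrArg (Nat.cast (R := R)) (Nat.add_one_mul_choose_eq (i + (t + 1)) i).symm
      push_cast at this
      exact this
    rw [abelPoly]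
    push_cast
    calc _ = q ^ (i + 1) * k * ((i + (t + 1) + 1) * k) ^ t *
          (((i + (t + 1) + 1).choose (i + 1) : R) * (i + 1)) := by ring
      _ = _ := by rw [hchoose]; ring

theorem sum_parkingFinset_eq_abelPoly {ι : Type u} [Fintype ι] (q : R) :
    ∑ c ∈ parkingFinset ι k, q ^ #{i | c i = 1} = abelPoly k (Fintype.card ι) q := by
  induction hn : Fintype.card ι using Nat.strong_induction_on generalizing ι q with
  | _ n ih =>
  rcases n with _ | m
  · have := Fintype.card_eq_zero_iff.1 hn
    rw [sum_parkingFinset_of_isEmpty, abelPoly]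
  have : Nonempty ι := Fintype.card_pos_iff.1 (by omega)
  have hfiber (A : Finset ι) :
      ∑ e ∈ parkingFinset {i // i ∉ A} k, ((#A : R) * k) ^ #{i | e i = 1} =
        abelPoly k (m + 1 - #A) ((#A : R) * k) := by
    have hcard : Fintype.card {i // i ∉ A} = m + 1 - #A := by
      simp [Fintype.card_subtype_compl, hn]
    rcases A.eq_empty_or_nonempty with rfl | hA
    · have : Nonempty {i // i ∉ (∅ : Finset ι)} := by simp
      simp [sum_parkingFinset_zero_pow, abelPoly]
    · exact ih _ (hcard ▸ Nat.sub_lt m.succ_pos hA.card_pos) _ hcard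
  rw [sum_parkingFinset_eq_sum_powerset, sum_congr rfl fun A _ => by rw [hfiber],
    sum_powerset_apply_card (fun j => q ^ j * abelPoly k (m + 1 - j) ((j : R) * k)), card_univ,
    hn, sum_range_choose_abelPoly]

end Generating

theorem q_analogue_one_k_parking (k l : ℕ) (hl : 0 < l) (q : ℝ) :
    ∑ c ∈ xParkFinset k l, q ^ (Finset.univ.filter (fun i => c i = 1)).card =
      q * (q + l * k) ^ (l - 1) := by
  obtain ⟨m, rfl⟩ := Nat.exists_eq_add_one_of_ne_zero hl.ne'
  rw [xParkFinset_eq_parkingFinset, sum_parkingFinset_eq_abelPoly, Fintype.card_fin, abelPoly]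
  simp
end

section
/- Let D be the derivation on ℚ[z,x,y,w] with D(z) = zxy, D(x) = xyw, D(y) = y³w, D(w) = yw². Then for all n ≥ 1, D^n(z) evaluated at y = z = 1, x = a, w = b equals a·(a+bn)^{n-1}, for any a, b (as an identity of polynomials in a and b). -/
open MvPolynomial

/-- The formal derivative of the grammar
`H : z → zxy, x → xyw, y → y³w, w → yw²`, as the derivation on `ℚ[z,x,y,w]`
(variables `0,1,2,3` are `z,x,y,w`). -/
noncomputable def Dgram : Derivation ℚ (MvPolynomial (Fin 4) ℚ) (MvPolynomial (Fin 4) ℚ) :=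
  MvPolynomial.mkDerivation ℚ
    ![X 0 * X 1 * X 2, X 1 * X 2 * X 3, X 2 ^ 3 * X 3, X 2 * X 3 ^ 2]

/-!
Each application of `D` to a monomial `z xᵉ yʲ wᵏ` produces monomials in which `e + k` has grown
by one. Specialised at `z = y = 1, x = a, w = b`, `Dⁿ (z xᵉ yʲ wᵏ)` is therefore `aᵉ bᵏ` times a
quantity depending only on `n`, `j` and the invariant `β = a + (e + k + n) b`. The recursion these
quantities inherit from `D` is solved by the Taylor coefficients
`n! [uⁿ] exp (β u) (1 - b u) ^ (1 - j)`, and at `j = 0` these are `(β - n b) βⁿ⁻¹`, which for `z`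
itself is `a (a + n b)ⁿ⁻¹`.
-/

/-- `n! [uⁿ] exp (β u) (1 - b u) ^ (1 - j)`, via the derivative of this series in `u`. -/
def abelCoeff {R : Type*} [CommRing R] (β b : R) : ℕ → ℕ → R
  | 0, _ => 1
  | n + 1, j => β * abelCoeff β b n j + ((j : R) - 1) * b * abelCoeff β b n (j + 1)

namespace abelCoeff

variable {R : Type*} [CommRing R] (β b : R)

theorem succ_succ (n j : ℕ) :
    abelCoeff β b (n + 1) (j + 1)
      = β * abelCoeff β b n (j + 1) + j * b * abelCoeff β b n (j + 2) := by
  simp [abelCoeff]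

theorem one_right (n : ℕ) : abelCoeff β b n 1 = β ^ n := by
  induction n with
  | zero => simp [abelCoeff]
  | succ n ih => simp [succ_succ, ih, pow_succ, mul_comm]

theorem succ_succ_sub (n j : ℕ) :
    abelCoeff β b (n + 1) (j + 1) - abelCoeff β b (n + 1) j
      = (n + 1) * b * abelCoeff β b n (j + 1) := by
  induction n generalizing j with
  | zero => simp only [abelCoeff]; push_cast; ring
  | succ n ih =>
    have h := succ_succ β b n j
    rw [succ_succ β b (n + 1) j, abelCoeff.eq_2 β b j (n + 1)]
    push_cast
    linear_combination β * ih j + j * b * ih (j + 1) - (n + 1) * b * h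

theorem succ_eq (n j : ℕ) :
    abelCoeff β b (n + 1) j
      = (β - (n + 1) * b) * abelCoeff β b n (j + 1) + j * b * abelCoeff β b n (j + 2) := by
  linear_combination succ_succ β b n j - succ_succ_sub β b n j

theorem succ_zero (n : ℕ) : abelCoeff β b (n + 1) 0 = (β - (n + 1) * b) * β ^ n := by
  simp [succ_eq, one_right]

end abelCoeff

theorem Derivation.map_pow_of_map_eq_mul {R A : Type*} [CommSemiring R] [CommSemiring A]
    [Algebra R A] (D : Derivation R A A) {p q : A} (h : D p = p * q) (e : ℕ) :
    D (p ^ e) = e • (p ^ e * q) := by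
  rcases e with _ | e
  · simp
  · rw [D.leibniz_pow, h, smul_eq_mul, pow_succ]
    simp only [Nat.add_sub_cancel, nsmul_eq_mul]
    ring

noncomputable def grammarMonomial (e j k : ℕ) : MvPolynomial (Fin 4) ℚ :=
  X 0 * X 1 ^ e * X 2 ^ j * X 3 ^ k

theorem Dgram_grammarMonomial (e j k : ℕ) :
    Dgram (grammarMonomial e j k) = grammarMonomial (e + 1) (j + 1) k
      + (e + k) • grammarMonomial e (j + 1) (k + 1) + j • grammarMonomial e (j + 2) (k + 1) := by
  have hX (i : Fin 4) : Dgram (X i) = _ := mkDerivation_X ℚ _ i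
  have h1 := Dgram.map_pow_of_map_eq_mul (p := X 1) (q := X 2 * X 3)
    (by simp only [hX, Matrix.cons_val]; ring) e
  have h2 := Dgram.map_pow_of_map_eq_mul (p := X 2) (q := X 2 ^ 2 * X 3)
    (by simp only [hX, Matrix.cons_val]; ring) j
  have h3 := Dgram.map_pow_of_map_eq_mul (p := X 3) (q := X 2 * X 3)
    (by simp only [hX, Matrix.cons_val]; ring) k
  simp only [grammarMonomial, Derivation.leibniz, h1, h2, h3, hX, Matrix.cons_val, smul_eq_mul,
    nsmul_eq_mul, Nat.cast_add]
  ring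

theorem aeval_iterate_Dgram_grammarMonomial {R : Type*} [CommRing R] [Algebra ℚ R] (a b : R)
    (n e j k : ℕ) :
    aeval ![(1 : R), a, 1, b] ((fun p => Dgram p)^[n] (grammarMonomial e j k)) =
      a ^ e * b ^ k * abelCoeff (a + (e + k + n) * b) b n j := by
  induction n generalizing e j k with
  | zero => simp [grammarMonomial, abelCoeff]
  | succ n ih =>
    have hlin : (fun p => Dgram p)^[n] = ⇑(Dgram.toLinearMap ^ n) := (Module.End.coe_pow _ n).symm
    rw [Function.iterate_succ_apply, Dgram_grammarMonomial, hlin]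
    simp only [map_add, map_nsmul]
    simp only [← hlin, ih, abelCoeff.succ_eq, nsmul_eq_mul]
    push_cast
    ring_nf

theorem grammar_counts_x_parking (n : ℕ) (hn : 1 ≤ n) (a b : ℝ) :
    MvPolynomial.aeval ![(1 : ℝ), a, 1, b] ((fun p => Dgram p)^[n] (X 0)) =
      a * (a + b * n) ^ (n - 1) := by
  obtain ⟨m, rfl⟩ := Nat.exists_eq_add_of_le' hn
  have hz : (X 0 : MvPolynomial (Fin 4) ℚ) = grammarMonomial 0 0 0 := by simp [grammarMonomial]
  rw [hz, aeval_iterate_Dgram_grammarMonomial, abelCoeff.succ_zero]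
  push_cast
  ring
end

section
/- Let D be the derivation on ℚ[z,x,y,w] with D(z) = zxy, D(x) = xyw, D(y) = y³w, D(w) = yw². Then for n ≥ 1, D^n(z)|_{y=1,z=1} = Σ_{k=1}^{n} C(n-1,k-1)·n^{n-k}·x^k·w^{n-k}; i.e., the coefficient of x^k w^{n-k} in D^n(z)|_{y=z=1} is the number C(n-1,k-1) n^{n-k} of labeled planted forests of k trees on [n]. -/
open MvPolynomial Finset

/-- Real-valued homogenized Ramanujan-type coefficient polynomials. -/
noncomputable def qr : ℕ → ℕ → ℝ → ℝ → ℝ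
  | 0, 0, _, _ => 1
  | 0, _+1, _, _ => 0
  | m+1, 0, x, w => (x + ((m : ℝ) + 1) * w) * qr m 0 x w
  | m+1, s+1, x, w => (x + ((m : ℝ) + 1) * w) * qr m (s+1) x w
      + ((m : ℝ) + 1 + (s : ℝ)) * w * qr m s x w

/-- Polynomial version of `qr` inside `ℚ[z,x,y,w]`, in variables `x = X 1`, `w = X 3`. -/
noncomputable def PP : ℕ → ℕ → MvPolynomial (Fin 4) ℚ
  | 0, 0 => 1
  | 0, _+1 => 0
  | m+1, 0 => (X 1 + ((m : MvPolynomial (Fin 4) ℚ) + 1) * X 3) * PP m 0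
  | m+1, s+1 => (X 1 + ((m : MvPolynomial (Fin 4) ℚ) + 1) * X 3) * PP m (s+1)
      + ((m : MvPolynomial (Fin 4) ℚ) + 1 + (s : MvPolynomial (Fin 4) ℚ)) * X 3 * PP m s

lemma qr_zero_zero (x w : ℝ) : qr 0 0 x w = 1 := rfl
lemma qr_zero_succ (s : ℕ) (x w : ℝ) : qr 0 (s+1) x w = 0 := rfl
lemma qr_succ_zero (m : ℕ) (x w : ℝ) :
    qr (m+1) 0 x w = (x + ((m : ℝ) + 1) * w) * qr m 0 x w := rfl
lemma qr_succ_succ (m s : ℕ) (x w : ℝ) :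
    qr (m+1) (s+1) x w = (x + ((m : ℝ) + 1) * w) * qr m (s+1) x w
      + ((m : ℝ) + 1 + (s : ℝ)) * w * qr m s x w := rfl

lemma PP_zero_zero : PP 0 0 = 1 := rfl
lemma PP_zero_succ (s : ℕ) : PP 0 (s+1) = 0 := rfl
lemma PP_succ_zero (m : ℕ) :
    PP (m+1) 0 = (X 1 + ((m : MvPolynomial (Fin 4) ℚ) + 1) * X 3) * PP m 0 := rfl
lemma PP_succ_succ (m s : ℕ) :
    PP (m+1) (s+1) = (X 1 + ((m : MvPolynomial (Fin 4) ℚ) + 1) * X 3) * PP m (s+1)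
      + ((m : MvPolynomial (Fin 4) ℚ) + 1 + (s : MvPolynomial (Fin 4) ℚ)) * X 3 * PP m s := rfl

lemma qr_van : ∀ m s, m < s → ∀ x w : ℝ, qr m s x w = 0 := by
  intro m
  induction m with
  | zero => intro s hs x w; match s, hs with | s+1, _ => rfl
  | succ m ih =>
    intro s hs x w
    match s, hs with
    | s+1, hs =>
      rw [qr_succ_succ, ih (s+1) (by omega), ih s (by omega)]
      ring

lemma PP_van : ∀ m s, m < s → PP m s = 0 := by
  intro m
  induction m with
  | zero => intro s hs; match s, hs with | s+1, _ => rfl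
  | succ m ih =>
    intro s hs
    match s, hs with
    | s+1, hs =>
      rw [PP_succ_succ, ih (s+1) (by omega), ih s (by omega)]
      ring

lemma Dgram_X0 : Dgram (X 0) = X 0 * X 1 * X 2 := by simp [Dgram, mkDerivation_X]
lemma Dgram_X1 : Dgram (X 1) = X 1 * X 2 * X 3 := by simp [Dgram, mkDerivation_X]
lemma Dgram_X2 : Dgram (X 2) = X 2 ^ 3 * X 3 := by simp [Dgram, mkDerivation_X]
lemma Dgram_X3 : Dgram (X 3) = X 2 * X 3 ^ 2 := by simp [Dgram, mkDerivation_X]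

lemma Dgram_natCast (k : ℕ) : Dgram ((k : MvPolynomial (Fin 4) ℚ)) = 0 := by
  have h := Dgram.map_algebraMap ((k : ℚ))
  rwa [map_natCast] at h

lemma Dgram_mul (a b : MvPolynomial (Fin 4) ℚ) :
    Dgram (a * b) = a * Dgram b + b * Dgram a := by
  rw [Derivation.leibniz]; simp [smul_eq_mul]

lemma Dgram_PP : ∀ m s, Dgram (PP m s) = (m : MvPolynomial (Fin 4) ℚ) * (X 2 * X 3 * PP m s) := by
  intro m
  induction m with
  | zero =>
    intro s
    match s with
    | 0 => rw [PP_zero_zero, Derivation.map_one_eq_zero]; simp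
    | s+1 => rw [PP_zero_succ]; simp
  | succ m ih =>
    intro s
    have hc1 : Dgram ((m : MvPolynomial (Fin 4) ℚ) + 1) = 0 := by
      have h1 : ((m : MvPolynomial (Fin 4) ℚ) + 1) = ((m + 1 : ℕ) : MvPolynomial (Fin 4) ℚ) := by
        push_cast; ring
      rw [h1, Dgram_natCast]
    match s with
    | 0 =>
      rw [PP_succ_zero, Dgram_mul, ih, map_add, Dgram_mul, Dgram_X1, Dgram_X3, hc1]
      push_cast
      ring
    | s+1 =>
      have hc2 : Dgram ((m : MvPolynomial (Fin 4) ℚ) + 1 + (s : MvPolynomial (Fin 4) ℚ)) = 0 := by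
        have h1 : ((m : MvPolynomial (Fin 4) ℚ) + 1 + (s : MvPolynomial (Fin 4) ℚ))
            = ((m + 1 + s : ℕ) : MvPolynomial (Fin 4) ℚ) := by push_cast; ring
        rw [h1, Dgram_natCast]
      rw [PP_succ_succ, map_add, Dgram_mul, Dgram_mul, ih, ih, map_add, Dgram_mul,
        Dgram_X1, Dgram_X3, hc1, Dgram_mul, Dgram_X3, hc2]
      push_cast
      ring

lemma key (m : ℕ) :
    ∑ s ∈ range (m+1+1), X 2 ^ (m+1+1+s) * PP (m+1) s
      = ∑ s ∈ range (m+1),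
          ((X 2 ^ (m+2+s) * ((X 1 + ((m : MvPolynomial (Fin 4) ℚ) + 1) * X 3) * PP m s))
            + ((m : MvPolynomial (Fin 4) ℚ) + 1 + (s : MvPolynomial (Fin 4) ℚ))
              * X 2 ^ (m+3+s) * X 3 * PP m s) := by
  rw [Finset.sum_range_succ']
  have h1 : ∀ s ∈ range (m+1), X 2 ^ (m+1+1+(s+1)) * PP (m+1) (s+1)
      = (X 2 ^ (m+2+(s+1)) * ((X 1 + ((m : MvPolynomial (Fin 4) ℚ) + 1) * X 3) * PP m (s+1)))
        + (((m : MvPolynomial (Fin 4) ℚ) + 1 + (s : MvPolynomial (Fin 4) ℚ))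
            * X 2 ^ (m+3+s) * X 3 * PP m s) := by
    intro s _
    rw [PP_succ_succ]
    ring
  rw [Finset.sum_congr rfl h1, Finset.sum_add_distrib]
  have h0 : X 2 ^ (m+1+1+0) * PP (m+1) 0
      = X 2 ^ (m+2+0) * ((X 1 + ((m : MvPolynomial (Fin 4) ℚ) + 1) * X 3) * PP m 0) := by
    rw [PP_succ_zero]
  rw [h0]
  have h2 : (∑ s ∈ range (m+1),
        X 2 ^ (m+2+(s+1)) * ((X 1 + ((m : MvPolynomial (Fin 4) ℚ) + 1) * X 3) * PP m (s+1)))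
      + X 2 ^ (m+2+0) * ((X 1 + ((m : MvPolynomial (Fin 4) ℚ) + 1) * X 3) * PP m 0)
      = ∑ s ∈ range (m+1),
        X 2 ^ (m+2+s) * ((X 1 + ((m : MvPolynomial (Fin 4) ℚ) + 1) * X 3) * PP m s) := by
    rw [← Finset.sum_range_succ'
      (fun s => X 2 ^ (m+2+s) * ((X 1 + ((m : MvPolynomial (Fin 4) ℚ) + 1) * X 3) * PP m s))
      (m+1), Finset.sum_range_succ]
    rw [PP_van m (m+1) (Nat.lt_succ_self m)]
    ring
  rw [add_right_comm, h2, ← Finset.sum_add_distrib]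

lemma Dgram_iter (m : ℕ) :
    (fun p => Dgram p)^[m+1] (X 0) =
      X 0 * X 1 * ∑ s ∈ range (m+1), X 2 ^ (m+1+s) * PP m s := by
  induction m with
  | zero =>
    rw [Function.iterate_one]
    show Dgram (X 0) = _
    rw [Dgram_X0]
    simp [PP_zero_zero]
  | succ m ih =>
    rw [Function.iterate_succ_apply', ih]
    show Dgram (X 0 * X 1 * ∑ s ∈ range (m+1), X 2 ^ (m+1+s) * PP m s) = _
    have hsum : Dgram (∑ s ∈ range (m+1), X 2 ^ (m+1+s) * PP m s)
        = ∑ s ∈ range (m+1), Dgram (X 2 ^ (m+1+s) * PP m s) :=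
      map_sum Dgram.toLinearMap _ _
    have hD : ∀ s ∈ range (m+1), Dgram (X 2 ^ (m+1+s) * PP m s) =
        X 2 ^ (m+1+s) * ((m : MvPolynomial (Fin 4) ℚ) * (X 2 * X 3 * PP m s))
          + PP m s * (((m+1+s : ℕ) : MvPolynomial (Fin 4) ℚ) * X 2 ^ (m+s) * (X 2 ^ 3 * X 3)) := by
      intro s _
      rw [Dgram_mul, Dgram_PP, Derivation.leibniz_pow, Dgram_X2]
      have h : m + 1 + s - 1 = m + s := by omega
      rw [h, nsmul_eq_mul, smul_eq_mul]
      ring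
    rw [Dgram_mul, Dgram_mul, Dgram_X0, Dgram_X1, hsum, Finset.sum_congr rfl hD, key m]
    rw [Finset.mul_sum, Finset.mul_sum, Finset.sum_mul, ← Finset.sum_add_distrib]
    apply Finset.sum_congr rfl
    intro s _
    push_cast
    ring

lemma qr_rec2 (m : ℕ) :
    (∀ x w : ℝ, qr (m+1) 0 x w = (x + w) * qr m 0 (x+w) w) ∧
    (∀ s : ℕ, ∀ x w : ℝ, qr (m+1) (s+1) x w
      = (x - (s:ℝ)*w) * qr m (s+1) (x+w) w + ((m:ℝ)+1+(s:ℝ)) * w * qr m s (x+w) w) := by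
  induction m with
  | zero =>
    constructor
    · intro x w
      rw [qr_succ_zero, qr_zero_zero, qr_zero_zero]
      push_cast; ring
    · intro s x w
      match s with
      | 0 =>
        rw [qr_succ_succ, qr_zero_succ, qr_zero_succ, qr_zero_zero, qr_zero_zero]
        push_cast; ring
      | t+1 =>
        rw [qr_succ_succ, qr_zero_succ, qr_zero_succ, qr_zero_succ, qr_zero_succ]
        push_cast; ring
  | succ m ih =>
    obtain ⟨ih0, ihs⟩ := ih
    constructor
    · intro x w
      rw [qr_succ_zero, ih0 x w, qr_succ_zero m (x+w) w]
      push_cast; ring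
    · intro s x w
      match s with
      | 0 =>
        rw [qr_succ_succ, ihs 0 x w, ih0 x w,
          qr_succ_succ m 0 (x+w) w, qr_succ_zero m (x+w) w]
        push_cast; ring
      | t+1 =>
        rw [qr_succ_succ, ihs (t+1) x w, ihs t x w,
          qr_succ_succ m (t+1) (x+w) w, qr_succ_succ m t (x+w) w]
        push_cast; ring

lemma sumA : ∀ (m : ℕ) (x w : ℝ),
    ∑ s ∈ range (m+1), qr m s x w = (x + ((m:ℝ)+1)*w)^m := by
  intro m
  induction m with
  | zero => intro x w; simp [qr_zero_zero]
  | succ m ih =>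
    intro x w
    rw [Finset.sum_range_succ']
    have h1 : ∀ s ∈ range (m+1), qr (m+1) (s+1) x w
        = ((x + w - ((s+1 : ℕ):ℝ)*w) * qr m (s+1) (x+w) w)
          + ((m:ℝ)+1+(s:ℝ)) * w * qr m s (x+w) w := by
      intro s _
      rw [(qr_rec2 m).2 s x w]
      push_cast; ring
    rw [Finset.sum_congr rfl h1, Finset.sum_add_distrib, (qr_rec2 m).1 x w]
    have h2 : (∑ s ∈ range (m+1), (x + w - ((s+1 : ℕ):ℝ)*w) * qr m (s+1) (x+w) w)
        + (x + w) * qr m 0 (x+w) w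
        = ∑ s ∈ range (m+1), (x + w - ((s : ℕ):ℝ)*w) * qr m s (x+w) w := by
      have h3 := Finset.sum_range_succ'
        (fun s => (x + w - ((s : ℕ):ℝ)*w) * qr m s (x+w) w) (m+1)
      rw [Finset.sum_range_succ] at h3
      rw [qr_van m (m+1) (Nat.lt_succ_self m) (x+w) w] at h3
      simp only [Nat.cast_zero, zero_mul, sub_zero, mul_zero, add_zero] at h3
      rw [← h3]
    rw [add_right_comm, h2, ← Finset.sum_add_distrib]
    have h4 : ∀ s ∈ range (m+1),
        (x + w - ((s : ℕ):ℝ)*w) * qr m s (x+w) w + ((m:ℝ)+1+(s:ℝ)) * w * qr m s (x+w) w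
        = (x + ((m:ℝ)+2)*w) * qr m s (x+w) w := by
      intro s _; ring
    rw [Finset.sum_congr rfl h4, ← Finset.mul_sum, ih (x+w) w]
    have h5 : x + w + ((m:ℝ)+1)*w = x + ((m:ℝ)+2)*w := by ring
    rw [h5, ← pow_succ']
    push_cast; ring

/-- Setting `y = z = 1` in `Dⁿ(z)` gives `∑_{k=1}^{n} C(n-1,k-1) n^{n-k} x^k w^{n-k}`:
the coefficient of `x^k w^{n-k}` is the number of labeled planted forests of `k`
trees on `[n]`. (Stated as an identity of the evaluations at arbitrary real `x, w`.) -/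
theorem grammar_forest_coefficients (n : ℕ) (hn : 1 ≤ n) (x w : ℝ) :
    MvPolynomial.aeval ![(1 : ℝ), x, 1, w] ((fun p => Dgram p)^[n] (X 0)) =
      ∑ k ∈ Finset.Icc 1 n,
        (Nat.choose (n - 1) (k - 1) : ℝ) * (n : ℝ) ^ (n - k) * x ^ k * w ^ (n - k) := by
  obtain ⟨m, rfl⟩ : ∃ m, n = m + 1 := ⟨n - 1, by omega⟩
  rw [Dgram_iter m, map_mul, map_mul, map_sum]
  have hv0 : (aeval ![(1 : ℝ), x, 1, w]) (X 0 : MvPolynomial (Fin 4) ℚ) = 1 := by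
    simp [aeval_X]
  have hv1 : (aeval ![(1 : ℝ), x, 1, w]) (X 1 : MvPolynomial (Fin 4) ℚ) = x := by
    simp [aeval_X]
  have hv2 : (aeval ![(1 : ℝ), x, 1, w]) (X 2 : MvPolynomial (Fin 4) ℚ) = 1 := by
    simp [aeval_X]
  have hv3 : (aeval ![(1 : ℝ), x, 1, w]) (X 3 : MvPolynomial (Fin 4) ℚ) = w := by
    simp [aeval_X]
  have hPP : ∀ m s, (aeval ![(1 : ℝ), x, 1, w]) (PP m s) = qr m s x w := by
    intro m
    induction m with
    | zero =>
      intro s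
      match s with
      | 0 => rw [PP_zero_zero, qr_zero_zero]; simp
      | s+1 => rw [PP_zero_succ, qr_zero_succ]; simp
    | succ m ih =>
      intro s
      match s with
      | 0 =>
        rw [PP_succ_zero, qr_succ_zero]
        simp only [map_mul, map_add, map_natCast, map_one, hv1, hv3, ih]
      | s+1 =>
        rw [PP_succ_succ, qr_succ_succ]
        simp only [map_mul, map_add, map_natCast, map_one, hv1, hv3, ih]
  have hterm : ∀ s ∈ range (m+1),
      (aeval ![(1 : ℝ), x, 1, w]) (X 2 ^ (m+1+s) * PP m s) = qr m s x w := by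
    intro s _
    rw [map_mul, map_pow, hv2, one_pow, one_mul, hPP]
  rw [hv0, hv1, Finset.sum_congr rfl hterm, sumA m x w, one_mul]
  -- RHS: reindex Icc and binomial theorem
  rw [← Finset.Ico_add_one_right_eq_Icc, Finset.sum_Ico_eq_sum_range]
  rw [show m + 1 + 1 - 1 = m + 1 by omega]
  rw [add_pow, Finset.mul_sum]
  refine Finset.sum_congr rfl ?_
  intro i hi
  rw [Finset.mem_range] at hi
  have e1 : 1 + i - 1 = i := by omega
  have e2 : m + 1 - (1 + i) = m - i := by omega
  have e3 : m + 1 - 1 = m := by omega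
  rw [e1, e2, e3, mul_pow]
  rw [show ((m:ℝ)+1) = ((m+1 : ℕ) : ℝ) by push_cast; ring]
  ring
end
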